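/- Assume t² ≠ −1. Since τ⁺(T) = τ⁻(T) = T, the automorphisms τ⁺ and τ⁻ of H_{q,t} fix the idempotent e and restrict to automorphisms of SH_{q,t}. Let Θ : B'_q → SH_{q,t} be the ℂ-algebra homomorphism with Θ(x) = (X + X⁻¹)·e, Θ(y) = (Y + Y⁻¹)·e, Θ(z) = q⁻¹·(X·Y·T⁻² + X⁻¹·Y⁻¹)·e. Then Θ ∘ τ⁺ = τ⁺ ∘ Θ and Θ ∘ τ⁻ = τ⁻ ∘ Θ, where τ± on the source are the automorphisms of B'_q with τ⁺(x) = x, τ⁺(y) = z, τ⁺(z) = q⁻¹·x·z − q⁻²·y and τ⁻(x) = z, τ⁻(y) = y, τ⁻(z) = q⁻¹·z·y − q⁻²·x. -/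

import Mathlib

noncomputable section

/-- Generators of the double affine Hecke algebra of type `A₁`. -/
inductive DGen : Type
  | X | Xi | Y | Yi | T

/-- The defining relations of the double affine Hecke algebra `H_{q,t}` of type `A₁`. -/
inductive DahaRel (q t : ℂ) : FreeAlgebra ℂ DGen → FreeAlgebra ℂ DGen → Prop
  | XXi : DahaRel q t (FreeAlgebra.ι ℂ DGen.X * FreeAlgebra.ι ℂ DGen.Xi) 1
  | XiX : DahaRel q t (FreeAlgebra.ι ℂ DGen.Xi * FreeAlgebra.ι ℂ DGen.X) 1
  | YYi : DahaRel q t (FreeAlgebra.ι ℂ DGen.Y * FreeAlgebra.ι ℂ DGen.Yi) 1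
  | YiY : DahaRel q t (FreeAlgebra.ι ℂ DGen.Yi * FreeAlgebra.ι ℂ DGen.Y) 1
  | TXT : DahaRel q t
      (FreeAlgebra.ι ℂ DGen.T * FreeAlgebra.ι ℂ DGen.X * FreeAlgebra.ι ℂ DGen.T)
      (FreeAlgebra.ι ℂ DGen.Xi)
  | TYiT : DahaRel q t
      (FreeAlgebra.ι ℂ DGen.T * FreeAlgebra.ι ℂ DGen.Yi * FreeAlgebra.ι ℂ DGen.T)
      (FreeAlgebra.ι ℂ DGen.Y)
  | XY : DahaRel q t (FreeAlgebra.ι ℂ DGen.X * FreeAlgebra.ι ℂ DGen.Y)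
      ((q ^ 2) • (FreeAlgebra.ι ℂ DGen.Y * FreeAlgebra.ι ℂ DGen.X *
        FreeAlgebra.ι ℂ DGen.T * FreeAlgebra.ι ℂ DGen.T))
  | hecke : DahaRel q t
      ((FreeAlgebra.ι ℂ DGen.T - algebraMap ℂ (FreeAlgebra ℂ DGen) t) *
        (FreeAlgebra.ι ℂ DGen.T + algebraMap ℂ (FreeAlgebra ℂ DGen) t⁻¹)) 0

/-- The double affine Hecke algebra `H_{q,t}` of type `A₁`. -/
abbrev DAHA (q t : ℂ) : Type := RingQuot (DahaRel q t)

/-- The generator `X` of `H_{q,t}`. -/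
def Xg (q t : ℂ) : DAHA q t := RingQuot.mkAlgHom ℂ (DahaRel q t) (FreeAlgebra.ι ℂ DGen.X)
/-- The generator `X⁻¹` of `H_{q,t}`. -/
def Xig (q t : ℂ) : DAHA q t := RingQuot.mkAlgHom ℂ (DahaRel q t) (FreeAlgebra.ι ℂ DGen.Xi)
/-- The generator `Y` of `H_{q,t}`. -/
def Yg (q t : ℂ) : DAHA q t := RingQuot.mkAlgHom ℂ (DahaRel q t) (FreeAlgebra.ι ℂ DGen.Y)
/-- The generator `Y⁻¹` of `H_{q,t}`. -/
def Yig (q t : ℂ) : DAHA q t := RingQuot.mkAlgHom ℂ (DahaRel q t) (FreeAlgebra.ι ℂ DGen.Yi)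
/-- The generator `T` of `H_{q,t}`. -/
def Tg (q t : ℂ) : DAHA q t := RingQuot.mkAlgHom ℂ (DahaRel q t) (FreeAlgebra.ι ℂ DGen.T)
/-- The idempotent `e = (T + t⁻¹)/(t + t⁻¹)` of `H_{q,t}`. -/
def idem (q t : ℂ) : DAHA q t :=
  (t + t⁻¹)⁻¹ • (Tg q t + algebraMap ℂ (DAHA q t) t⁻¹)

/-- The element `T⁻¹ = T + t⁻¹ - t` of `H_{q,t}`. -/
def Tinv (q t : ℂ) : DAHA q t :=
  Tg q t + algebraMap ℂ (DAHA q t) t⁻¹ - algebraMap ℂ (DAHA q t) t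
/-- Generators of the algebra `B'_q`. -/
inductive BGen : Type
  | x | y | z

/-- The defining relations of `B'_q`: `[x,y]_q = (q²-q⁻²)z`, `[z,x]_q = (q²-q⁻²)y`,
`[y,z]_q = (q²-q⁻²)x`, where `[a,b]_q = q·a·b - q⁻¹·b·a`. -/
inductive BRel (q : ℂ) : FreeAlgebra ℂ BGen → FreeAlgebra ℂ BGen → Prop
  | xy : BRel q
      (q • (FreeAlgebra.ι ℂ BGen.x * FreeAlgebra.ι ℂ BGen.y) -
        q⁻¹ • (FreeAlgebra.ι ℂ BGen.y * FreeAlgebra.ι ℂ BGen.x))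
      ((q ^ 2 - q ^ (-2 : ℤ)) • FreeAlgebra.ι ℂ BGen.z)
  | zx : BRel q
      (q • (FreeAlgebra.ι ℂ BGen.z * FreeAlgebra.ι ℂ BGen.x) -
        q⁻¹ • (FreeAlgebra.ι ℂ BGen.x * FreeAlgebra.ι ℂ BGen.z))
      ((q ^ 2 - q ^ (-2 : ℤ)) • FreeAlgebra.ι ℂ BGen.y)
  | yz : BRel q
      (q • (FreeAlgebra.ι ℂ BGen.y * FreeAlgebra.ι ℂ BGen.z) -
        q⁻¹ • (FreeAlgebra.ι ℂ BGen.z * FreeAlgebra.ι ℂ BGen.y))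
      ((q ^ 2 - q ^ (-2 : ℤ)) • FreeAlgebra.ι ℂ BGen.x)

/-- The algebra `B'_q`. -/
abbrev Bq (q : ℂ) : Type := RingQuot (BRel q)

/-- The generator `x` of `B'_q`. -/
def xg (q : ℂ) : Bq q := RingQuot.mkAlgHom ℂ (BRel q) (FreeAlgebra.ι ℂ BGen.x)
/-- The generator `y` of `B'_q`. -/
def yg (q : ℂ) : Bq q := RingQuot.mkAlgHom ℂ (BRel q) (FreeAlgebra.ι ℂ BGen.y)
/-- The generator `z` of `B'_q`. -/
def zg (q : ℂ) : Bq q := RingQuot.mkAlgHom ℂ (BRel q) (FreeAlgebra.ι ℂ BGen.z)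

/-- The element `w = q²x² + q⁻²y² + q²z² - q·x·y·z` of `B'_q`. -/
def wEl (q : ℂ) : Bq q :=
  (q ^ 2) • (xg q * xg q) + (q ^ (-2 : ℤ)) • (yg q * yg q) +
    (q ^ 2) • (zg q * zg q) - q • (xg q * yg q * zg q)

/-! Put `x̂ = X + X⁻¹`, `ŷ = Y + Y⁻¹`, `ẑ = q⁻¹(XYT⁻² + X⁻¹Y⁻¹)` (`DAHA.xLift`, `yLift`, `zLift`),
so that `Θ(g) = ĝ·Θ(1)` for each generator `g`, and `Θ(1) = e` is fixed by `τ±`. The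
transformation rules of `τ±` on `x, y, z` already hold for `x̂, ŷ, ẑ` in `H_{q,t}` itself, before
multiplying by `e`: for `τ⁺` this comes from `T⁻¹X⁻¹Y⁻¹ = XYT⁻¹` and the inverted relation
`q²Y⁻¹X⁻¹ = T⁻²X⁻¹Y⁻¹`, for `τ⁻` from `T²Y⁻¹ + YT⁻² = Y + Y⁻¹` (that is, `Y + Y⁻¹` commutes with
`T`). Since `Θ(g·b) = ĝ·Θ(b)`, the rules pass to `Θ`, and two non-unital homomorphisms out of
`B'_q` that agree on `1` and on `x, y, z` agree everywhere. -/

theorem mul_mul_cancel_left_of_mul_eq_one {M : Type*} [Monoid M] {a b : M} (h : a * b = 1)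
    (c : M) : a * (b * c) = c := by
  rw [← mul_assoc, h, one_mul]

theorem mul_mul_cancel_right_of_mul_eq_one {M : Type*} [Monoid M] {b c : M} (h : b * c = 1)
    (a : M) : a * b * c = a := by
  rw [mul_assoc, h, mul_one]

theorem map_eq_of_mul_eq_one {M N F : Type*} [Monoid M] [Monoid N] [FunLike F M N]
    [MonoidHomClass F M N] (φ : F) {a b : M} (hba : b * a = 1) {c : N} (hc : φ a * c = 1) :
    φ b = c :=
  left_inv_eq_right_inv (by rw [← map_mul, hba, map_one]) hc

theorem map_mul_of_map_eq_mul_map_one {A B F : Type*} [MulOneClass A] [Semigroup B]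
    [FunLike F A B] [MulHomClass F A B] (f : F) {a : A} {u : B} (h : f a = u * f 1) (b : A) :
    f (a * b) = u * f b := by
  rw [map_mul, h, mul_assoc, ← map_mul, one_mul]

theorem NonUnitalAlgHom.ext_ringQuot_freeAlgebra {R X A : Type*} [CommSemiring R]
    [NonUnitalNonAssocSemiring A] [Module R A] {r : FreeAlgebra R X → FreeAlgebra R X → Prop}
    {f g : RingQuot r →ₙₐ[R] A} (h1 : f 1 = g 1)
    (hι : ∀ x, f (RingQuot.mkAlgHom R r (FreeAlgebra.ι R x)) =
      g (RingQuot.mkAlgHom R r (FreeAlgebra.ι R x))) :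
    f = g := by
  ext b
  obtain ⟨a, rfl⟩ := RingQuot.mkAlgHom_surjective R r b
  induction a using FreeAlgebra.induction with
  | grade0 c => simp only [Algebra.algebraMap_eq_smul_one, map_smul, map_one, h1]
  | grade1 x => exact hι x
  | mul a b ha hb => simp only [map_mul, ha, hb]
  | add a b ha hb => simp only [map_add, ha, hb]

theorem Bq.map_comp_eq_of_generators {q : ℂ} {A G F : Type*} [Semiring A] [Algebra ℂ A]
    [FunLike G (Bq q) (Bq q)] [AlgHomClass G ℂ (Bq q) (Bq q)] [FunLike F A A]
    [AlgHomClass F ℂ A A] (Θ : Bq q →ₙₐ[ℂ] A) (σ : G) (φ : F) (h1 : φ (Θ 1) = Θ 1)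
    (hx : Θ (σ (xg q)) = φ (Θ (xg q))) (hy : Θ (σ (yg q)) = φ (Θ (yg q)))
    (hz : Θ (σ (zg q)) = φ (Θ (zg q))) (b : Bq q) :
    Θ (σ b) = φ (Θ b) := by
  have : Θ.comp (σ : Bq q →ₙₐ[ℂ] Bq q) = (φ : A →ₙₐ[ℂ] A).comp Θ := by
    refine NonUnitalAlgHom.ext_ringQuot_freeAlgebra ?_ ?_
    · change Θ (σ 1) = φ (Θ 1)
      rw [map_one, h1]
    · rintro (_ | _ | _)
      exacts [hx, hy, hz]
  exact DFunLike.congr_fun this b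

namespace DAHA

variable {q t : ℂ}

theorem Xg_mul_Xig : Xg q t * Xig q t = 1 := by
  simpa [Xg, Xig] using RingQuot.mkAlgHom_rel ℂ (DahaRel.XXi (q := q) (t := t))

theorem Xig_mul_Xg : Xig q t * Xg q t = 1 := by
  simpa [Xg, Xig] using RingQuot.mkAlgHom_rel ℂ (DahaRel.XiX (q := q) (t := t))

theorem Yg_mul_Yig : Yg q t * Yig q t = 1 := by
  simpa [Yg, Yig] using RingQuot.mkAlgHom_rel ℂ (DahaRel.YYi (q := q) (t := t))

theorem Yig_mul_Yg : Yig q t * Yg q t = 1 := by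
  simpa [Yg, Yig] using RingQuot.mkAlgHom_rel ℂ (DahaRel.YiY (q := q) (t := t))

theorem Tg_mul_Xg_mul_Tg : Tg q t * Xg q t * Tg q t = Xig q t := by
  simpa [Tg, Xg, Xig] using RingQuot.mkAlgHom_rel ℂ (DahaRel.TXT (q := q) (t := t))

theorem Tg_mul_Yig_mul_Tg : Tg q t * Yig q t * Tg q t = Yg q t := by
  simpa [Tg, Yg, Yig] using RingQuot.mkAlgHom_rel ℂ (DahaRel.TYiT (q := q) (t := t))

theorem Xg_mul_Yg : Xg q t * Yg q t = q ^ 2 • (Yg q t * Xg q t * Tg q t * Tg q t) := by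
  simpa [Xg, Yg, Tg] using RingQuot.mkAlgHom_rel ℂ (DahaRel.XY (q := q) (t := t))

theorem Tg_mul_Tg (ht : t ≠ 0) : Tg q t * Tg q t = (t - t⁻¹) • Tg q t + 1 := by
  have h := RingQuot.mkAlgHom_rel ℂ (DahaRel.hecke (q := q) (t := t))
  rw [map_mul, map_sub, map_add, map_zero, AlgHom.commutes, AlgHom.commutes] at h
  simp only [Algebra.algebraMap_eq_smul_one, sub_mul, mul_add, mul_smul_comm, smul_mul_assoc,
    mul_one, one_mul] at h
  rw [← sub_eq_zero, ← h, Tg]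
  match_scalars <;> field_simp
  ring

theorem Tinv_eq : Tinv q t = Tg q t + (t⁻¹ - t) • 1 := by
  rw [Tinv, add_sub_assoc, ← map_sub, Algebra.algebraMap_eq_smul_one]

theorem Tg_mul_Tinv (ht : t ≠ 0) : Tg q t * Tinv q t = 1 := by
  rw [Tinv_eq, mul_add, Tg_mul_Tg ht, mul_smul_comm, mul_one]
  module

theorem Tinv_mul_Tg (ht : t ≠ 0) : Tinv q t * Tg q t = 1 := by
  rw [Tinv_eq, add_mul, Tg_mul_Tg ht, smul_mul_assoc, one_mul]
  module

theorem Tinv_mul_Tinv (ht : t ≠ 0) : Tinv q t * Tinv q t = (t⁻¹ - t) • Tinv q t + 1 := by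
  simp only [Tinv_eq, add_mul, mul_add, Tg_mul_Tg ht, smul_mul_assoc, mul_smul_comm,
    one_mul, mul_one]
  module

theorem Tinv_mul_Xig (ht : t ≠ 0) : Tinv q t * Xig q t = Xg q t * Tg q t := by
  rw [← Tg_mul_Xg_mul_Tg, mul_assoc, mul_mul_cancel_left_of_mul_eq_one (Tinv_mul_Tg ht)]

theorem Tg_mul_Yig (ht : t ≠ 0) : Tg q t * Yig q t = Yg q t * Tinv q t := by
  rw [← Tg_mul_Yig_mul_Tg, mul_mul_cancel_right_of_mul_eq_one (Tg_mul_Tinv ht)]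

theorem Xg_mul_Yg_mul_Tinv_sq (ht : t ≠ 0) :
    Xg q t * Yg q t * (Tinv q t * Tinv q t) = q ^ 2 • (Yg q t * Xg q t) := by
  rw [Xg_mul_Yg, smul_mul_assoc, ← mul_assoc,
    mul_mul_cancel_right_of_mul_eq_one (Tg_mul_Tinv ht),
    mul_mul_cancel_right_of_mul_eq_one (Tg_mul_Tinv ht)]

theorem Tinv_mul_Xig_mul_Yig (ht : t ≠ 0) :
    Tinv q t * (Xig q t * Yig q t) = Xg q t * Yg q t * Tinv q t := by
  rw [← mul_assoc, Tinv_mul_Xig ht, mul_assoc, Tg_mul_Yig ht, mul_assoc]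

theorem Tinv_sq_mul_Xig_mul_Yig (ht : t ≠ 0) :
    Tinv q t * Tinv q t * (Xig q t * Yig q t) =
      Xg q t * Yg q t * (Tinv q t * Tinv q t) - Xg q t * Yg q t + Xig q t * Yig q t := by
  rw [Tinv_mul_Tinv ht, add_mul, smul_mul_assoc, Tinv_mul_Xig_mul_Yig ht, mul_add,
    mul_smul_comm, one_mul, mul_one]
  abel

theorem sq_smul_Yig_mul_Xig (ht : t ≠ 0) :
    q ^ 2 • (Yig q t * Xig q t) = Tinv q t * Tinv q t * (Xig q t * Yig q t) :=
  calc q ^ 2 • (Yig q t * Xig q t)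
      = Yig q t * Xig q t * (q ^ 2 • (Yg q t * Xg q t)) * (Xig q t * Yig q t) := by
        simp only [mul_smul_comm, smul_mul_assoc, mul_assoc,
          mul_mul_cancel_left_of_mul_eq_one Xg_mul_Xig, Yg_mul_Yig, mul_one]
    _ = Tinv q t * Tinv q t * (Xig q t * Yig q t) := by
        simp only [← Xg_mul_Yg_mul_Tinv_sq ht, mul_assoc,
          mul_mul_cancel_left_of_mul_eq_one Xig_mul_Xg,
          mul_mul_cancel_left_of_mul_eq_one Yig_mul_Yg]

theorem smul_Yig_mul_Xig (hq : q ≠ 0) (ht : t ≠ 0) :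
    q • (Yig q t * Xig q t) =
      q⁻¹ • (Xg q t * Yg q t * (Tinv q t * Tinv q t) - Xg q t * Yg q t + Xig q t * Yig q t) := by
  rw [← Tinv_sq_mul_Xig_mul_Yig ht, ← sq_smul_Yig_mul_Xig ht, smul_smul]
  congr 1
  field_simp

theorem Tg_mul_Tg_mul_Yig (ht : t ≠ 0) :
    Tg q t * Tg q t * Yig q t = Yg q t + Yig q t - Yg q t * (Tinv q t * Tinv q t) := by
  rw [Tg_mul_Tg ht, Tinv_mul_Tinv ht, add_mul, smul_mul_assoc, Tg_mul_Yig ht, mul_add,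
    mul_smul_comm, one_mul, mul_one]
  module

theorem sq_smul_Yg_mul_Xg_mul (ht : t ≠ 0) :
    q ^ 2 • (Yg q t * Xg q t * (Yg q t + Yig q t - Yg q t * (Tinv q t * Tinv q t))) =
      Xg q t := by
  rw [← Tg_mul_Tg_mul_Yig ht]
  calc q ^ 2 • (Yg q t * Xg q t * (Tg q t * Tg q t * Yig q t))
      = q ^ 2 • (Yg q t * Xg q t * Tg q t * Tg q t) * Yig q t := by
        simp only [smul_mul_assoc, mul_assoc]
    _ = Xg q t := by rw [← Xg_mul_Yg, mul_mul_cancel_right_of_mul_eq_one Yg_mul_Yig]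

def xLift (q t : ℂ) : DAHA q t := Xg q t + Xig q t

def yLift (q t : ℂ) : DAHA q t := Yg q t + Yig q t

def zLift (q t : ℂ) : DAHA q t :=
  q⁻¹ • (Xg q t * Yg q t * (Tinv q t * Tinv q t) + Xig q t * Yig q t)

variable {F : Type*} [FunLike F (DAHA q t) (DAHA q t)] [AlgHomClass F ℂ (DAHA q t) (DAHA q t)]
  (φ : F)

theorem map_Tinv_of_map_Tg (hT : φ (Tg q t) = Tg q t) : φ (Tinv q t) = Tinv q t := by
  simp only [Tinv, map_sub, map_add, AlgHomClass.commutes, hT]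

theorem map_idem_of_map_Tg (hT : φ (Tg q t) = Tg q t) : φ (idem q t) = idem q t := by
  simp only [idem, map_smul, map_add, AlgHomClass.commutes, hT]

theorem tauPlus_map_Yig (hq : q ≠ 0)
    (hY : φ (Yg q t) = q⁻¹ • (Xg q t * Yg q t)) : φ (Yig q t) = q • (Yig q t * Xig q t) := by
  refine map_eq_of_mul_eq_one φ Yig_mul_Yg ?_
  rw [hY, smul_mul_smul, inv_mul_cancel₀ hq, one_smul, mul_assoc,
    mul_mul_cancel_left_of_mul_eq_one Yg_mul_Yig, Xg_mul_Xig]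

theorem tauPlus_map_xLift (hX : φ (Xg q t) = Xg q t) : φ (xLift q t) = xLift q t := by
  rw [xLift, map_add, hX, map_eq_of_mul_eq_one φ Xig_mul_Xg (by rw [hX, Xg_mul_Xig])]

theorem tauPlus_map_yLift (hq : q ≠ 0) (ht : t ≠ 0)
    (hY : φ (Yg q t) = q⁻¹ • (Xg q t * Yg q t)) : φ (yLift q t) = zLift q t := by
  rw [yLift, map_add, hY, tauPlus_map_Yig φ hq hY, smul_Yig_mul_Xig hq ht, zLift]
  module

theorem tauPlus_map_zLift (hq : q ≠ 0) (ht : t ≠ 0) (hX : φ (Xg q t) = Xg q t)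
    (hT : φ (Tg q t) = Tg q t) (hY : φ (Yg q t) = q⁻¹ • (Xg q t * Yg q t)) :
    φ (zLift q t) = q⁻¹ • (xLift q t * zLift q t) - q ^ (-2 : ℤ) • yLift q t := by
  simp only [zLift, map_smul, map_add, map_mul, hX, hY, map_Tinv_of_map_Tg φ hT,
    tauPlus_map_Yig φ hq hY, map_eq_of_mul_eq_one φ Xig_mul_Xg (by rw [hX, Xg_mul_Xig])]
  rw [smul_Yig_mul_Xig hq ht]
  simp only [xLift, yLift, mul_add, add_mul, mul_sub, mul_smul_comm, smul_mul_assoc,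
    ← mul_assoc, Xig_mul_Xg, Xg_mul_Xig, one_mul, zpow_neg, zpow_two, mul_inv]
  module

theorem tauMinus_map_Xig (hq : q ≠ 0) (hX : φ (Xg q t) = q • (Yg q t * Xg q t)) :
    φ (Xig q t) = q⁻¹ • (Xig q t * Yig q t) := by
  refine map_eq_of_mul_eq_one φ Xig_mul_Xg ?_
  rw [hX, smul_mul_smul, mul_inv_cancel₀ hq, one_smul, mul_assoc,
    mul_mul_cancel_left_of_mul_eq_one Xg_mul_Xig, Yg_mul_Yig]

theorem tauMinus_map_yLift (hY : φ (Yg q t) = Yg q t) : φ (yLift q t) = yLift q t := by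
  rw [yLift, map_add, hY, map_eq_of_mul_eq_one φ Yig_mul_Yg (by rw [hY, Yg_mul_Yig])]

theorem tauMinus_map_xLift (hq : q ≠ 0) (ht : t ≠ 0) (hX : φ (Xg q t) = q • (Yg q t * Xg q t)) :
    φ (xLift q t) = zLift q t := by
  rw [xLift, map_add, hX, tauMinus_map_Xig φ hq hX, zLift, Xg_mul_Yg_mul_Tinv_sq ht]
  match_scalars <;> field_simp

theorem tauMinus_map_zLift (hq : q ≠ 0) (ht : t ≠ 0) (hX : φ (Xg q t) = q • (Yg q t * Xg q t))
    (hT : φ (Tg q t) = Tg q t) (hY : φ (Yg q t) = Yg q t) :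
    φ (zLift q t) = q⁻¹ • (zLift q t * yLift q t) - q ^ (-2 : ℤ) • xLift q t := by
  have h := sq_smul_Yg_mul_Xg_mul (q := q) ht
  simp only [zLift, map_smul, map_add, map_mul, hX, hY, map_Tinv_of_map_Tg φ hT,
    tauMinus_map_Xig φ hq hX, map_eq_of_mul_eq_one φ Yig_mul_Yg (by rw [hY, Yg_mul_Yig])]
  rw [Xg_mul_Yg_mul_Tinv_sq ht]
  simp only [xLift, yLift, mul_add, add_mul, mul_sub, smul_mul_assoc,
    smul_add, smul_sub, ← mul_assoc, mul_mul_cancel_right_of_mul_eq_one Yig_mul_Yg, zpow_neg,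
    zpow_two, mul_inv] at h ⊢
  linear_combination (norm := skip) (-(q⁻¹ * q⁻¹)) • h
  match_scalars <;> field_simp <;> ring

end DAHA

theorem tau_intertwine_general (q t : ℂ) (hq : q ≠ 0) (ht : t ≠ 0)
    (τp τm : DAHA q t ≃ₐ[ℂ] DAHA q t)
    (hτpX : τp (Xg q t) = Xg q t) (hτpT : τp (Tg q t) = Tg q t)
    (hτpY : τp (Yg q t) = q⁻¹ • (Xg q t * Yg q t))
    (hτmX : τm (Xg q t) = q • (Yg q t * Xg q t)) (hτmT : τm (Tg q t) = Tg q t)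
    (hτmY : τm (Yg q t) = Yg q t)
    (Θ : Bq q →ₙₐ[ℂ] DAHA q t)
    (hΘ1 : Θ 1 = idem q t)
    (hΘx : Θ (xg q) = (Xg q t + Xig q t) * idem q t)
    (hΘy : Θ (yg q) = (Yg q t + Yig q t) * idem q t)
    (hΘz : Θ (zg q) = q⁻¹ • ((Xg q t * Yg q t * (Tinv q t * Tinv q t) +
      Xig q t * Yig q t) * idem q t))
    (τpB τmB : Bq q ≃ₐ[ℂ] Bq q)
    (hτpBx : τpB (xg q) = xg q) (hτpBy : τpB (yg q) = zg q)
    (hτpBz : τpB (zg q) = q⁻¹ • (xg q * zg q) - q ^ (-2 : ℤ) • yg q)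
    (hτmBx : τmB (xg q) = zg q) (hτmBy : τmB (yg q) = yg q)
    (hτmBz : τmB (zg q) = q⁻¹ • (zg q * yg q) - q ^ (-2 : ℤ) • xg q) :
    τp (idem q t) = idem q t ∧ τm (idem q t) = idem q t ∧
    (∀ h : DAHA q t, ∃ h' : DAHA q t,
      τp (idem q t * h * idem q t) = idem q t * h' * idem q t) ∧
    (∀ h : DAHA q t, ∃ h' : DAHA q t,
      τm (idem q t * h * idem q t) = idem q t * h' * idem q t) ∧
    (∀ b : Bq q, Θ (τpB b) = τp (Θ b)) ∧
    (∀ b : Bq q, Θ (τmB b) = τm (Θ b)) := by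
  have hpe : τp (idem q t) = idem q t := DAHA.map_idem_of_map_Tg τp hτpT
  have hme : τm (idem q t) = idem q t := DAHA.map_idem_of_map_Tg τm hτmT
  have hp1 : τp (Θ 1) = Θ 1 := by rw [hΘ1, hpe]
  have hm1 : τm (Θ 1) = Θ 1 := by rw [hΘ1, hme]
  have hΘx' : Θ (xg q) = DAHA.xLift q t * Θ 1 := by rw [hΘx, hΘ1, DAHA.xLift]
  have hΘy' : Θ (yg q) = DAHA.yLift q t * Θ 1 := by rw [hΘy, hΘ1, DAHA.yLift]
  have hΘz' : Θ (zg q) = DAHA.zLift q t * Θ 1 := by rw [hΘz, hΘ1, DAHA.zLift, smul_mul_assoc]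
  refine ⟨hpe, hme, fun h => ⟨τp h, by rw [map_mul, map_mul, hpe]⟩,
    fun h => ⟨τm h, by rw [map_mul, map_mul, hme]⟩, ?_, ?_⟩
  · refine Bq.map_comp_eq_of_generators Θ τpB τp hp1 ?_ ?_ ?_
    · rw [hτpBx, hΘx', map_mul, DAHA.tauPlus_map_xLift τp hτpX, hp1]
    · rw [hτpBy, hΘz', hΘy', map_mul, DAHA.tauPlus_map_yLift τp hq ht hτpY, hp1]
    · rw [hτpBz, map_sub, map_smul, map_smul, map_mul_of_map_eq_mul_map_one Θ hΘx', hΘy', hΘz',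
        map_mul, DAHA.tauPlus_map_zLift τp hq ht hτpX hτpT hτpY, hp1, sub_mul, smul_mul_assoc,
        smul_mul_assoc, mul_assoc]
  · refine Bq.map_comp_eq_of_generators Θ τmB τm hm1 ?_ ?_ ?_
    · rw [hτmBx, hΘz', hΘx', map_mul, DAHA.tauMinus_map_xLift τm hq ht hτmX, hm1]
    · rw [hτmBy, hΘy', map_mul, DAHA.tauMinus_map_yLift τm hτmY, hm1]
    · rw [hτmBz, map_sub, map_smul, map_smul, map_mul_of_map_eq_mul_map_one Θ hΘz', hΘy', hΘx',
        hΘz', map_mul, DAHA.tauMinus_map_zLift τm hq ht hτmX hτmT hτmY, hm1, sub_mul,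
        smul_mul_assoc, smul_mul_assoc, mul_assoc]

/-- The automorphisms `τ±` of `H_{q,t}` fix the idempotent `e` and restrict to automorphisms
of the spherical subalgebra `SH_{q,t} = e·H_{q,t}·e`, and the homomorphism
`Θ : B'_q → SH_{q,t}` with `Θ(x) = (X+X⁻¹)e`, `Θ(y) = (Y+Y⁻¹)e`,
`Θ(z) = q⁻¹(XYT⁻² + X⁻¹Y⁻¹)e` intertwines the `τ±` of `B'_q` with the `τ±` of `H_{q,t}`. -/
theorem tau_intertwine (q t : ℂ) (hq : q ≠ 0) (ht : t ≠ 0) (ht2 : t ^ 2 ≠ -1)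
    (τp τm : DAHA q t ≃ₐ[ℂ] DAHA q t)
    (hτpX : τp (Xg q t) = Xg q t) (hτpT : τp (Tg q t) = Tg q t)
    (hτpY : τp (Yg q t) = q⁻¹ • (Xg q t * Yg q t))
    (hτmX : τm (Xg q t) = q • (Yg q t * Xg q t)) (hτmT : τm (Tg q t) = Tg q t)
    (hτmY : τm (Yg q t) = Yg q t)
    (Θ : Bq q →ₙₐ[ℂ] DAHA q t)
    (hΘ1 : Θ 1 = idem q t)
    (hΘx : Θ (xg q) = (Xg q t + Xig q t) * idem q t)
    (hΘy : Θ (yg q) = (Yg q t + Yig q t) * idem q t)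
    (hΘz : Θ (zg q) = q⁻¹ • ((Xg q t * Yg q t * (Tinv q t * Tinv q t) +
      Xig q t * Yig q t) * idem q t))
    (τpB τmB : Bq q ≃ₐ[ℂ] Bq q)
    (hτpBx : τpB (xg q) = xg q) (hτpBy : τpB (yg q) = zg q)
    (hτpBz : τpB (zg q) = q⁻¹ • (xg q * zg q) - q ^ (-2 : ℤ) • yg q)
    (hτmBx : τmB (xg q) = zg q) (hτmBy : τmB (yg q) = yg q)
    (hτmBz : τmB (zg q) = q⁻¹ • (zg q * yg q) - q ^ (-2 : ℤ) • xg q) :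
    τp (idem q t) = idem q t ∧ τm (idem q t) = idem q t ∧
    (∀ h : DAHA q t, ∃ h' : DAHA q t,
      τp (idem q t * h * idem q t) = idem q t * h' * idem q t) ∧
    (∀ h : DAHA q t, ∃ h' : DAHA q t,
      τm (idem q t * h * idem q t) = idem q t * h' * idem q t) ∧
    (∀ b : Bq q, Θ (τpB b) = τp (Θ b)) ∧
    (∀ b : Bq q, Θ (τmB b) = τm (Θ b)) :=
  tau_intertwine_general q t hq ht τp τm hτpX hτpT hτpY hτmX hτmT hτmY Θ hΘ1 hΘx hΘy hΘz τpB τmB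
    hτpBx hτpBy hτpBz hτmBx hτmBy hτmBz
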